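/- For the cycle C_n on n ≥ 3 vertices, the 2-Grundy domination number satisfies γ_gr^2(C_n) = n − 1. -/

import Mathlib

/-- A sequence `S` of distinct vertices is a generalized `k`-Grundy sequence with respect to
neighborhood assignments `N₁` (where the footprinted vertex must lie relative to the new
vertex) and `N₂` (the neighborhoods of earlier vertices that must contain the footprinted
vertex fewer than `k` times): for each position `i` there is a vertex `u ∈ N₁ (S i)` that
belongs to `N₂ w` for fewer than `k` of the vertices `w` preceding position `i`. -/
def IsGrundySeq {V : Type*} (k : ℕ) (N₁ N₂ : V → Set V) (S : List V) : Prop :=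
  S.Nodup ∧ ∀ (i : ℕ) (hi : i < S.length),
    ∃ u ∈ N₁ (S.get ⟨i, hi⟩), {w | w ∈ S.take i ∧ u ∈ N₂ w}.ncard < k

/-- The length of a longest generalized `k`-Grundy sequence. -/
noncomputable def grundyVal {V : Type*} (k : ℕ) (N₁ N₂ : V → Set V) : ℕ :=
  sSup {m | ∃ S : List V, IsGrundySeq k N₁ N₂ S ∧ S.length = m}

/-- The closed neighborhood `N[v]` of a vertex. -/
def closedNbhd {V : Type*} (G : SimpleGraph V) (v : V) : Set V :=
  insert v (G.neighborSet v)

/-- The `k`-Grundy domination number `γ_gr^k(G)`. -/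
noncomputable def kGrundy {V : Type*} (G : SimpleGraph V) (k : ℕ) : ℕ :=
  grundyVal k (closedNbhd G) (closedNbhd G)

/-- The `k`-`L`-Grundy domination number `γ_gr^{L,k}(G)`. -/
noncomputable def kLGrundy {V : Type*} (G : SimpleGraph V) (k : ℕ) : ℕ :=
  grundyVal k (closedNbhd G) G.neighborSet

/-- The `k`-`Z`-Grundy domination number `γ_gr^{Z,k}(G)`. -/
noncomputable def kZGrundy {V : Type*} (G : SimpleGraph V) (k : ℕ) : ℕ :=
  grundyVal k G.neighborSet (closedNbhd G)

/-- The `k`-`t`-Grundy domination number `γ_gr^{t,k}(G)`. -/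
noncomputable def ktGrundy {V : Type*} (G : SimpleGraph V) (k : ℕ) : ℕ :=
  grundyVal k G.neighborSet G.neighborSet

/-
The upper bound holds in every graph of minimum degree at least `k`: if a `k`-sequence used
every vertex, its last vertex `v` would have to footprint some `u ∈ N[v]`, but every vertex of
`N[u] \ {v}` already occurs earlier, and these are `deg u ≥ k` vertices. For the lower bound,
list the vertices `0, 1, …, n - 2` of `C_n` in order, each footprinting its successor: the only
earlier vertex whose closed neighborhood can contain `i + 1` is `0`, when `i + 1 = n - 1`.
-/

open SimpleGraph

section Grundy

variable {V : Type*}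

theorem grundyVal_eq_of_forall_length_le {k m : ℕ} {N₁ N₂ : V → Set V} {S : List V}
    (hS : IsGrundySeq k N₁ N₂ S) (hlen : S.length = m)
    (hbound : ∀ T, IsGrundySeq k N₁ N₂ T → T.length ≤ m) :
    grundyVal k N₁ N₂ = m :=
  IsGreatest.csSup_eq ⟨⟨S, hS, hlen⟩, by rintro _ ⟨T, hT, rfl⟩; exact hbound T hT⟩

theorem mem_closedNbhd_comm {G : SimpleGraph V} {u v : V} :
    u ∈ closedNbhd G v ↔ v ∈ closedNbhd G u := by
  simp only [closedNbhd, Set.mem_insert_iff, mem_neighborSet, G.adj_comm, eq_comm]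

theorem ncard_closedNbhd (G : SimpleGraph V) (v : V) [Fintype (G.neighborSet v)] :
    (closedNbhd G v).ncard = G.degree v + 1 := by
  rw [closedNbhd, Set.ncard_insert_of_notMem G.notMem_neighborSet_self,
    Set.ncard_eq_toFinset_card', Set.toFinset_card, card_neighborSet_eq_degree]

theorem IsGrundySeq.length_lt_card [Fintype V] [Nonempty V] {G : SimpleGraph V}
    [G.LocallyFinite] {k : ℕ} (hdeg : ∀ v, k ≤ G.degree v) {S : List V}
    (hS : IsGrundySeq k (closedNbhd G) (closedNbhd G) S) : S.length < Fintype.card V := by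
  refine lt_of_le_of_ne hS.1.length_le_card fun hcard => ?_
  have hne : S ≠ [] := List.ne_nil_of_length_pos (hcard ▸ Fintype.card_pos)
  have hall : ∀ v, v ∈ S := by
    classical
    intro v
    rw [← List.mem_toFinset,
      Finset.eq_univ_of_card S.toFinset (by rw [List.toFinset_card_of_nodup hS.1, hcard])]
    exact Finset.mem_univ v
  obtain ⟨u, hu, hfew⟩ := hS.2 (S.length - 1) (Nat.sub_one_lt (List.length_pos_iff.mpr hne).ne')
  rw [List.get_eq_getElem, ← List.getLast_eq_getElem hne] at hu
  rw [← List.dropLast_eq_take] at hfew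
  have hdom : closedNbhd G u \ {S.getLast hne} ⊆
      {w | w ∈ S.dropLast ∧ u ∈ closedNbhd G w} := fun w ⟨hw, hwv⟩ =>
    ⟨List.mem_dropLast_of_mem_of_ne_getLast (hall w) hwv, mem_closedNbhd_comm.mp hw⟩
  have hle := Set.ncard_le_ncard hdom
  rw [Set.ncard_sdiff_singleton_of_mem (mem_closedNbhd_comm.mp hu), ncard_closedNbhd] at hle
  have hku := hdeg u
  omega

end Grundy

theorem mem_take_finRange {n i : ℕ} {w : Fin n} : w ∈ (List.finRange n).take i ↔ w.val < i := by
  simp [List.mem_take_iff_getElem, Fin.ext_iff]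

theorem val_eq_zero_of_mem_closedNbhd_cycleGraph {n : ℕ} {u w : Fin n} (hwu : w.val + 1 < u.val)
    (h : u ∈ closedNbhd (cycleGraph n) w) : w.val = 0 := by
  have hlt : w < u := Fin.lt_def.mpr (by omega)
  rcases h with rfl | h
  · omega
  rw [mem_neighborSet, cycleGraph_adj', Fin.coe_sub_iff_lt.mpr hlt,
    Fin.coe_sub_iff_le.mpr hlt.le] at h
  omega

theorem isGrundySeq_cycleGraph_take_finRange (n : ℕ) :
    IsGrundySeq 2 (closedNbhd (cycleGraph n)) (closedNbhd (cycleGraph n))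
      ((List.finRange n).take (n - 1)) := by
  refine ⟨(List.take_sublist _ _).nodup (List.nodup_finRange n), fun i hi => ?_⟩
  have hi' : i + 1 < n := by simp at hi; omega
  refine ⟨⟨i + 1, hi'⟩, Or.inr ?_, ?_⟩
  · have hlt : (⟨i, by omega⟩ : Fin n) < ⟨i + 1, hi'⟩ := Fin.lt_def.mpr (Nat.lt_succ_self i)
    simp only [List.get_eq_getElem, List.getElem_take, List.getElem_finRange, Fin.cast_mk,
      mem_neighborSet, cycleGraph_adj', Fin.coe_sub_iff_le.mpr hlt.le]
    omega
  · have hsub : {w | w ∈ ((List.finRange n).take (n - 1)).take i ∧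
        (⟨i + 1, hi'⟩ : Fin n) ∈ closedNbhd (cycleGraph n) w}.Subsingleton := by
      rintro w ⟨hw, hwu⟩ w' ⟨hw', hw'u⟩
      rw [List.take_take, mem_take_finRange] at hw hw'
      exact Fin.ext <| (val_eq_zero_of_mem_closedNbhd_cycleGraph (by simp; omega) hwu).trans
        (val_eq_zero_of_mem_closedNbhd_cycleGraph (by simp; omega) hw'u).symm
    exact (Set.ncard_le_one_iff_subsingleton.mpr hsub).trans_lt one_lt_two

/-- For `n ≥ 3`, `γ_gr^2(C_n) = n - 1`. -/
theorem kGrundy_cycleGraph (n : ℕ) (hn : 3 ≤ n) :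
    kGrundy (SimpleGraph.cycleGraph n) 2 = n - 1 := by
  obtain ⟨m, rfl⟩ : ∃ m, n = m + 3 := ⟨n - 3, by omega⟩
  refine grundyVal_eq_of_forall_length_le
    (isGrundySeq_cycleGraph_take_finRange _) (by simp) fun T hT => ?_
  have hlt := hT.length_lt_card fun _ => cycleGraph_degree_three_le.ge
  rw [Fintype.card_fin] at hlt
  omega
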